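/- On ℝ⁴ with coordinates (x¹,x²,p₁,p₂), the bivector Λ₁ = p₁ ∂_{x¹}∧∂_{p₁} + p₂x² ∂_{x²}∧∂_{p₂} is a Poisson tensor, and it is compatible with the canonical Poisson tensor Λ = ∂_{x¹}∧∂_{p₁} + ∂_{x²}∧∂_{p₂}: the Schouten–Nijenhuis bracket [Λ, Λ₁] vanishes, so every linear combination Λ₁ − λΛ is Poisson. -/

import Mathlib

/-- ℝ⁴ with coordinates (x¹, x², p₁, p₂). -/
abbrev V4 := ℝ × ℝ × ℝ × ℝ

/-- ∂/∂x¹. -/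
noncomputable def pdx1 (f : V4 → ℝ) (x : V4) : ℝ := fderiv ℝ f x (1, 0, 0, 0)
/-- ∂/∂x². -/
noncomputable def pdx2 (f : V4 → ℝ) (x : V4) : ℝ := fderiv ℝ f x (0, 1, 0, 0)
/-- ∂/∂p₁. -/
noncomputable def pdp1 (f : V4 → ℝ) (x : V4) : ℝ := fderiv ℝ f x (0, 0, 1, 0)
/-- ∂/∂p₂. -/
noncomputable def pdp2 (f : V4 → ℝ) (x : V4) : ℝ := fderiv ℝ f x (0, 0, 0, 1)

/-- The canonical Poisson bracket of Λ = ∂_{x¹}∧∂_{p₁} + ∂_{x²}∧∂_{p₂}. -/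
noncomputable def brkCan (f g : V4 → ℝ) (x : V4) : ℝ :=
  (pdx1 f x * pdp1 g x - pdp1 f x * pdx1 g x)
    + (pdx2 f x * pdp2 g x - pdp2 f x * pdx2 g x)

/-- The bracket of the bivector Λ₁ = p₁ ∂_{x¹}∧∂_{p₁} + p₂x² ∂_{x²}∧∂_{p₂}. -/
noncomputable def brkOne (f g : V4 → ℝ) (x : V4) : ℝ :=
  x.2.2.1 * (pdx1 f x * pdp1 g x - pdp1 f x * pdx1 g x)
    + x.2.2.2 * x.2.1 * (pdx2 f x * pdp2 g x - pdp2 f x * pdx2 g x)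

/-- The pencil bracket of Λ₁ − λΛ. -/
noncomputable def brkPencil (lam : ℝ) (f g : V4 → ℝ) (x : V4) : ℝ :=
  brkOne f g x - lam * brkCan f g x

/- Statement 16: Λ₁ is a Poisson tensor (its bracket satisfies the Jacobi
identity), and it is compatible with the canonical Poisson tensor Λ
([Λ,Λ₁]_{SN} = 0): every pencil bracket Λ₁ − λΛ satisfies the Jacobi identity. -/
noncomputable def pd (v : V4) (f : V4 → ℝ) (x : V4) : ℝ := fderiv ℝ f x v
noncomputable def e1 : V4 := (1,0,0,0)
noncomputable def e2 : V4 := (0,1,0,0)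
noncomputable def e3 : V4 := (0,0,1,0)
noncomputable def e4 : V4 := (0,0,0,1)

noncomputable def brk (c : ℝ) (f g : V4 → ℝ) (x : V4) : ℝ :=
  (x.2.2.1 - c) * (pd e1 f x * pd e3 g x - pd e3 f x * pd e1 g x)
    + (x.2.2.2 * x.2.1 - c) * (pd e2 f x * pd e4 g x - pd e4 f x * pd e2 g x)

noncomputable def cp1 : V4 →L[ℝ] ℝ :=
  (ContinuousLinearMap.fst ℝ ℝ ℝ).comp ((ContinuousLinearMap.snd ℝ ℝ (ℝ×ℝ)).comp
    (ContinuousLinearMap.snd ℝ ℝ (ℝ×ℝ×ℝ)))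
noncomputable def cx2 : V4 →L[ℝ] ℝ :=
  (ContinuousLinearMap.fst ℝ ℝ (ℝ×ℝ)).comp (ContinuousLinearMap.snd ℝ ℝ (ℝ×ℝ×ℝ))
noncomputable def cp2 : V4 →L[ℝ] ℝ :=
  (ContinuousLinearMap.snd ℝ ℝ ℝ).comp ((ContinuousLinearMap.snd ℝ ℝ (ℝ×ℝ)).comp
    (ContinuousLinearMap.snd ℝ ℝ (ℝ×ℝ×ℝ)))

lemma pd_smooth {f : V4 → ℝ} (hf : ContDiff ℝ (⊤ : ℕ∞) f) (v : V4) : ContDiff ℝ (⊤ : ℕ∞) (pd v f) :=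
  (hf.fderiv_right (by simp)).clm_apply contDiff_const

lemma pd_symm {f : V4 → ℝ} (hf : ContDiff ℝ (⊤ : ℕ∞) f) (v w : V4) (x : V4) :
    pd v (pd w f) x = pd w (pd v f) x := by
  have hs : IsSymmSndFDerivAt ℝ f x := hf.contDiffAt.isSymmSndFDerivAt (by
    rw [minSmoothness_of_isRCLikeNormedField]; exact WithTop.coe_le_coe.mpr (le_top : ((2:ℕ∞)) ≤ ⊤))
  have hdf : DifferentiableAt ℝ (fderiv ℝ f) x :=
    ((hf.fderiv_right (m := 1) (by exact WithTop.coe_le_coe.mpr (le_top : (((1+1:ℕ):ℕ∞)) ≤ ⊤))).differentiable one_ne_zero).differentiableAt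
  have hd : ∀ u1 u2 : V4, pd u1 (pd u2 f) x = fderiv ℝ (fderiv ℝ f) x u1 u2 := by
    intro u1 u2
    show fderiv ℝ (fun y => (fderiv ℝ f y) u2) x u1 = _
    rw [fderiv_clm_apply hdf (differentiableAt_const u2)]
    simp
  rw [hd v w, hd w v]
  exact hs v w

lemma pd_brk (c : ℝ) {f g : V4 → ℝ} (hf : ContDiff ℝ (⊤ : ℕ∞) f) (hg : ContDiff ℝ (⊤ : ℕ∞) g)
    (v x : V4) :
    pd v (brk c f g) x =
      v.2.2.1 * (pd e1 f x * pd e3 g x - pd e3 f x * pd e1 g x)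
      + (x.2.2.1 - c) * (pd v (pd e1 f) x * pd e3 g x + pd e1 f x * pd v (pd e3 g) x
          - (pd v (pd e3 f) x * pd e1 g x + pd e3 f x * pd v (pd e1 g) x))
      + (v.2.2.2 * x.2.1 + x.2.2.2 * v.2.1)
          * (pd e2 f x * pd e4 g x - pd e4 f x * pd e2 g x)
      + (x.2.2.2 * x.2.1 - c) * (pd v (pd e2 f) x * pd e4 g x + pd e2 f x * pd v (pd e4 g) x
          - (pd v (pd e4 f) x * pd e2 g x + pd e4 f x * pd v (pd e2 g) x)) := by
  have hP : ∀ (u : V4) (k : V4 → ℝ), ContDiff ℝ (⊤ : ℕ∞) k →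
      HasFDerivAt (pd u k) (fderiv ℝ (pd u k) x) x := fun u k hk =>
    (((pd_smooth hk u).differentiable (by simp)) x).hasFDerivAt
  have hA : HasFDerivAt (fun y : V4 => y.2.2.1 - c) cp1 x := by
    exact (cp1.hasFDerivAt (x := x)).sub_const c
  have hB : HasFDerivAt (fun y : V4 => y.2.2.2 * y.2.1 - c)
      (x.2.2.2 • cx2 + x.2.1 • cp2) x := by
    exact ((cp2.hasFDerivAt (x := x)).mul (cx2.hasFDerivAt (x := x))).sub_const c
  have hT1 : HasFDerivAt (fun y => pd e1 f y * pd e3 g y - pd e3 f y * pd e1 g y)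
      ((pd e1 f x • fderiv ℝ (pd e3 g) x + pd e3 g x • fderiv ℝ (pd e1 f) x)
        - (pd e3 f x • fderiv ℝ (pd e1 g) x + pd e1 g x • fderiv ℝ (pd e3 f) x)) x :=
    ((hP e1 f hf).mul (hP e3 g hg)).sub ((hP e3 f hf).mul (hP e1 g hg))
  have hT2 : HasFDerivAt (fun y => pd e2 f y * pd e4 g y - pd e4 f y * pd e2 g y)
      ((pd e2 f x • fderiv ℝ (pd e4 g) x + pd e4 g x • fderiv ℝ (pd e2 f) x)
        - (pd e4 f x • fderiv ℝ (pd e2 g) x + pd e2 g x • fderiv ℝ (pd e4 f) x)) x :=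
    ((hP e2 f hf).mul (hP e4 g hg)).sub ((hP e4 f hf).mul (hP e2 g hg))
  have hD : fderiv ℝ (brk c f g) x =
      (x.2.2.1 - c) •
          (pd e1 f x • fderiv ℝ (pd e3 g) x + pd e3 g x • fderiv ℝ (pd e1 f) x -
            (pd e3 f x • fderiv ℝ (pd e1 g) x + pd e1 g x • fderiv ℝ (pd e3 f) x)) +
        (pd e1 f x * pd e3 g x - pd e3 f x * pd e1 g x) • cp1 +
      ((x.2.2.2 * x.2.1 - c) •
          (pd e2 f x • fderiv ℝ (pd e4 g) x + pd e4 g x • fderiv ℝ (pd e2 f) x -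
            (pd e4 f x • fderiv ℝ (pd e2 g) x + pd e2 g x • fderiv ℝ (pd e4 f) x)) +
        (pd e2 f x * pd e4 g x - pd e4 f x * pd e2 g x) • (x.2.2.2 • cx2 + x.2.1 • cp2)) :=
    ((hA.mul hT1).add (hB.mul hT2)).fderiv
  show fderiv ℝ (brk c f g) x v = _
  rw [hD]
  simp only [ContinuousLinearMap.add_apply, ContinuousLinearMap.smul_apply,
    ContinuousLinearMap.sub_apply, ContinuousLinearMap.coe_comp', Function.comp_apply,
    ContinuousLinearMap.coe_fst', ContinuousLinearMap.coe_snd', smul_eq_mul,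
    cp1, cx2, cp2]
  have hpd : ∀ (u : V4) (k : V4 → ℝ), (fderiv ℝ (pd u k) x) v = pd v (pd u k) x :=
    fun _ _ => rfl
  simp only [hpd]
  ring

lemma jacobi (c : ℝ) {f g h : V4 → ℝ} (hf : ContDiff ℝ (⊤ : ℕ∞) f) (hg : ContDiff ℝ (⊤ : ℕ∞) g)
    (hh : ContDiff ℝ (⊤ : ℕ∞) h) (x : V4) :
    brk c (brk c f g) h x + brk c (brk c g h) f x + brk c (brk c h f) g x = 0 := by
  simp only [brk]
  rw [pd_brk c hf hg e1 x, pd_brk c hf hg e2 x, pd_brk c hf hg e3 x, pd_brk c hf hg e4 x,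
      pd_brk c hg hh e1 x, pd_brk c hg hh e2 x, pd_brk c hg hh e3 x, pd_brk c hg hh e4 x,
      pd_brk c hh hf e1 x, pd_brk c hh hf e2 x, pd_brk c hh hf e3 x, pd_brk c hh hf e4 x]
  simp only [pd_symm hf e2 e1, pd_symm hf e3 e1, pd_symm hf e4 e1, pd_symm hf e3 e2,
    pd_symm hf e4 e2, pd_symm hf e4 e3, pd_symm hg e2 e1, pd_symm hg e3 e1, pd_symm hg e4 e1,
    pd_symm hg e3 e2, pd_symm hg e4 e2, pd_symm hg e4 e3, pd_symm hh e2 e1, pd_symm hh e3 e1,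
    pd_symm hh e4 e1, pd_symm hh e3 e2, pd_symm hh e4 e2, pd_symm hh e4 e3]
  have h1 : e1.2.2.1 = 0 ∧ e1.2.2.2 = 0 ∧ e1.2.1 = 0 := by norm_num [e1]
  have h2 : e2.2.2.1 = 0 ∧ e2.2.2.2 = 0 ∧ e2.2.1 = 1 := by norm_num [e2]
  have h3 : e3.2.2.1 = 1 ∧ e3.2.2.2 = 0 ∧ e3.2.1 = 0 := by norm_num [e3]
  have h4 : e4.2.2.1 = 0 ∧ e4.2.2.2 = 1 ∧ e4.2.1 = 0 := by norm_num [e4]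
  rw [h1.1, h1.2.1, h1.2.2, h2.1, h2.2.1, h2.2.2, h3.1, h3.2.1, h3.2.2,
      h4.1, h4.2.1, h4.2.2]
  ring

lemma brkOne_eq : brkOne = brk 0 := by
  funext f g x
  show brkOne f g x = brk 0 f g x
  unfold brkOne brk pdx1 pdx2 pdp1 pdp2 pd e1 e2 e3 e4
  ring

lemma brkPencil_eq (lam : ℝ) : brkPencil lam = brk lam := by
  funext f g x
  show brkPencil lam f g x = brk lam f g x
  unfold brkPencil brkOne brkCan brk pdx1 pdx2 pdp1 pdp2 pd e1 e2 e3 e4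
  ring

theorem stmt_16 :
    (∀ f g h : V4 → ℝ, ContDiff ℝ (⊤ : ℕ∞) f → ContDiff ℝ (⊤ : ℕ∞) g → ContDiff ℝ (⊤ : ℕ∞) h →
      ∀ x : V4,
        brkOne (brkOne f g) h x + brkOne (brkOne g h) f x
          + brkOne (brkOne h f) g x = 0)
    ∧ (∀ lam : ℝ, ∀ f g h : V4 → ℝ,
        ContDiff ℝ (⊤ : ℕ∞) f → ContDiff ℝ (⊤ : ℕ∞) g → ContDiff ℝ (⊤ : ℕ∞) h →
        ∀ x : V4,
          brkPencil lam (brkPencil lam f g) h x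
            + brkPencil lam (brkPencil lam g h) f x
            + brkPencil lam (brkPencil lam h f) g x = 0) := by
  constructor
  · intro f g h hf hg hh x
    rw [brkOne_eq]
    exact jacobi 0 hf hg hh x
  · intro lam f g h hf hg hh x
    rw [brkPencil_eq]
    exact jacobi lam hf hg hh x
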